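/- Let G be a finite simple graph and j a vertex all of whose neighbors remain pairwise connected in G \ {j}. If G is connected on n ≥ 2 vertices and j has at least one neighbor, then G \ {j} is connected and c(j) = 2(n−1). -/
import Mathlib


open SimpleGraph

/-- Total pairwise connectivity: the number of ordered pairs of distinct
vertices that are connected by a walk. -/
noncomputable def totalPC {V : Type*} (G : SimpleGraph V) : ℕ :=
  Nat.card {p : V × V // p.1 ≠ p.2 ∧ G.Reachable p.1 p.2}

/-- Pairwise connectivity score of a vertex `j`: `P(G) - P(G \ {j})`. -/
noncomputable def cscore {V : Type*} (G : SimpleGraph V) (j : V) : ℤ :=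
  (totalPC G : ℤ) - totalPC (G.induce ({j}ᶜ : Set V))

/-- `S` is a vertex cover of `G`. -/
def IsVertexCover {V : Type*} (G : SimpleGraph V) (S : Set V) : Prop :=
  ∀ ⦃u v : V⦄, G.Adj u v → u ∈ S ∨ v ∈ S

lemma reroute {V : Type*} (G : SimpleGraph V) (j : V)
    (h : ∀ (u v : V) (hu : G.Adj j u) (hv : G.Adj j v),
      (G.induce ({j}ᶜ : Set V)).Reachable
        ⟨u, by simp [hu.ne']⟩ ⟨v, by simp [hv.ne']⟩) :
    ∀ (n : ℕ) {u v : V} (p : G.Walk u v), p.length ≤ n → ∀ (hu : u ≠ j) (hv : v ≠ j),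
      (G.induce ({j}ᶜ : Set V)).Reachable ⟨u, by simp [hu]⟩ ⟨v, by simp [hv]⟩ := by
  intro n
  induction n with
  | zero =>
    intro u v p hp hu hv
    cases p with
    | nil => exact Reachable.refl _
    | cons h' q => simp at hp
  | succ n ih =>
    intro u v p hp hu hv
    cases p with
    | nil => exact Reachable.refl _
    | @cons _ w _ h' q =>
      by_cases hw : j = w
      · subst hw
        cases q with
        | nil => exact absurd rfl hv
        | @cons _ w' _ h2 q' =>
          have hw' : w' ≠ j := h2.ne'
          refine (h u w' h'.symm h2).trans (ih q' ?_ hw' hv)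
          simp at hp; omega
      · have hwj : w ≠ j := fun e => hw e.symm
        have hadj : (G.induce ({j}ᶜ : Set V)).Adj ⟨u, by simp [hu]⟩ ⟨w, by simp [hwj]⟩ := by
          simp [h']
        refine hadj.reachable.trans (ih q ?_ hwj hv)
        simp at hp; omega

lemma totalPC_of_preconnected {V : Type*} [Finite V] (G : SimpleGraph V) (hG : G.Preconnected) :
    totalPC G = Nat.card V * (Nat.card V - 1) := by
  classical
  cases nonempty_fintype V
  have e1 : {p : V × V // p.1 ≠ p.2 ∧ G.Reachable p.1 p.2} ≃ {p : V × V // ¬ p.1 = p.2} :=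
    Equiv.subtypeEquivRight (fun p => by simp [hG p.1 p.2])
  have e2 : {p : V × V // p.1 = p.2} ≃ V :=
    ⟨fun p => p.1.1, fun v => ⟨(v, v), rfl⟩, fun p => Subtype.ext (Prod.ext rfl p.2),
      fun v => rfl⟩
  rw [totalPC, Nat.card_congr e1, Nat.card_eq_fintype_card,
    Fintype.card_subtype_compl, Fintype.card_congr e2]
  simp [Nat.card_eq_fintype_card, Fintype.card_prod]
  cases Nat.eq_zero_or_pos (Fintype.card V) with
  | inl h0 => simp [h0]
  | inr h1 => rw [Nat.mul_sub_one]

theorem stmt_15 {V : Type*} [Fintype V] (G : SimpleGraph V) (j : V)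
    (hG : G.Connected) (hn : 2 ≤ Fintype.card V)
    (hnbr : ∃ u, G.Adj j u)
    (h : ∀ (u v : V) (hu : G.Adj j u) (hv : G.Adj j v),
      (G.induce ({j}ᶜ : Set V)).Reachable
        ⟨u, by simp [hu.ne']⟩ ⟨v, by simp [hv.ne']⟩) :
    (G.induce ({j}ᶜ : Set V)).Connected ∧
      cscore G j = 2 * ((Fintype.card V : ℤ) - 1) := by
  classical
  obtain ⟨u0, hu0⟩ := hnbr
  have hconn : (G.induce ({j}ᶜ : Set V)).Connected := by
    rw [connected_iff]
    refine ⟨?_, ⟨⟨u0, by simp [hu0.ne']⟩⟩⟩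
    rintro ⟨a, ha⟩ ⟨b, hb⟩
    have ha' : a ≠ j := by simpa using ha
    have hb' : b ≠ j := by simpa using hb
    obtain ⟨p⟩ := hG.preconnected a b
    exact reroute G j h p.length p le_rfl ha' hb'
  refine ⟨hconn, ?_⟩
  have hcard : Nat.card ({j}ᶜ : Set V) = Fintype.card V - 1 := by
    have e : ({j}ᶜ : Set V) ≃ {x : V // ¬ x = j} := Equiv.subtypeEquivRight (by simp)
    rw [Nat.card_congr e, Nat.card_eq_fintype_card, Fintype.card_subtype_compl]
    simp
  have h1 : totalPC G = Fintype.card V * (Fintype.card V - 1) := by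
    rw [totalPC_of_preconnected G hG.preconnected, Nat.card_eq_fintype_card]
  have h2 : totalPC (G.induce ({j}ᶜ : Set V)) =
      (Fintype.card V - 1) * (Fintype.card V - 2) := by
    rw [totalPC_of_preconnected _ hconn.preconnected, hcard]
    rw [show Fintype.card V - 1 - 1 = Fintype.card V - 2 from by omega]
  obtain ⟨k, hk⟩ : ∃ k, Fintype.card V = k + 2 := ⟨Fintype.card V - 2, by omega⟩
  rw [cscore, h1, h2, hk]
  push_cast
  ring
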